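/- arXiv:1701.03141 — 4 statements merged into one kernel-verified Lean document; each statement's English description precedes it below -/
import Mathlib

section
/- Let d ≥ 1 and let G be a d-regular graph on n vertices with at least one edge, and let U be a real number. If for every nonempty subset A of V(G) one has 2·e(A)/(d·|A|) − |A|/n < U (equivalently: no subset of size xn induces yxn/2 edges with y/d − x ≥ U), then q*(G) < U. -/
/-!
In a `d`-regular graph on `n` vertices, `2|E| = dn`, so a part `A` of a partition contributes
`x (y/d - x)` to its modularity, where `x = |A|/n` and `y = 2e(A)/|A|`. The hypothesis bounds
the second factor by `U`, and the `x` sum to `1` over the parts; since there are finitely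
many partitions, `q*` is attained, hence `q* < U`.
-/

open Finset

noncomputable section

variable {V : Type*} [Fintype V] [DecidableEq V]

/-- The number of edges of `G` with both endpoints in the set `A`, as a real number
(ordered adjacent pairs inside `A`, divided by two). -/
noncomputable def edgesIn (G : SimpleGraph V) (A : Finset V) : ℝ :=
  (Nat.card {p : V × V // G.Adj p.1 p.2 ∧ p.1 ∈ A ∧ p.2 ∈ A} : ℝ) / 2

/-- The number of edges of `G`, as a real number. -/
noncomputable def edgeCount (G : SimpleGraph V) : ℝ := (Nat.card G.edgeSet : ℝ)

/-- The degree of a vertex, as a real number. -/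
noncomputable def degR (G : SimpleGraph V) (v : V) : ℝ := (Nat.card (G.neighborSet v) : ℝ)

/-- The modularity `q_𝒜(G)` of a partition `𝒜` of the vertex set of `G`. -/
noncomputable def modularityOf (G : SimpleGraph V)
    (P : Finpartition (Finset.univ : Finset V)) : ℝ :=
  ∑ A ∈ P.parts,
    (edgesIn G A / edgeCount G - (∑ v ∈ A, degR G v) ^ 2 / (4 * edgeCount G ^ 2))

/-- The modularity `q*(G)`: the maximum of `q_𝒜(G)` over all partitions `𝒜` of `V(G)`. -/
noncomputable def modularity (G : SimpleGraph V) : ℝ :=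
  sSup {q : ℝ | ∃ P : Finpartition (Finset.univ : Finset V), q = modularityOf G P}

namespace SimpleGraph

omit [DecidableEq V]

variable (G : SimpleGraph V) [DecidableRel G.Adj]

theorem edgeCount_eq_card_edgeFinset : edgeCount G = #G.edgeFinset := by
  rw [edgeCount, Nat.card_eq_fintype_card, edgeFinset_card]

theorem degR_eq_degree (v : V) : degR G v = G.degree v := by
  rw [degR, Nat.card_eq_fintype_card, card_neighborSet_eq_degree]

variable {G}

theorem IsRegularOfDegree.two_mul_edgeCount {d : ℕ} (hreg : G.IsRegularOfDegree d) :
    2 * edgeCount G = d * Fintype.card V := by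
  rw [edgeCount_eq_card_edgeFinset]
  exact_mod_cast (G.sum_degrees_eq_twice_card_edges.symm.trans
    (by simp [hreg.degree_eq, mul_comm]))

theorem IsRegularOfDegree.mul_card_pos {d : ℕ} (hreg : G.IsRegularOfDegree d)
    (hm : 0 < edgeCount G) : (0 : ℝ) < d * Fintype.card V :=
  hreg.two_mul_edgeCount ▸ by positivity

theorem IsRegularOfDegree.modularity_term_eq {d : ℕ} (hreg : G.IsRegularOfDegree d)
    (hm : 0 < edgeCount G) {A : Finset V} (hA : A.Nonempty) :
    edgesIn G A / edgeCount G - (∑ v ∈ A, degR G v) ^ 2 / (4 * edgeCount G ^ 2) =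
      (#A / Fintype.card V) * (2 * edgesIn G A / (d * #A) - #A / Fintype.card V) := by
  have hA' : (0 : ℝ) < #A := by exact_mod_cast hA.card_pos
  have hdn := hreg.mul_card_pos hm
  have hd : (d : ℝ) ≠ 0 := left_ne_zero_of_mul hdn.ne'
  have hn : (Fintype.card V : ℝ) ≠ 0 := right_ne_zero_of_mul hdn.ne'
  have hdeg : ∑ v ∈ A, degR G v = d * #A := by
    simp [degR_eq_degree, hreg.degree_eq, mul_comm]
  rw [hdeg, show 4 * edgeCount G ^ 2 = (2 * edgeCount G) ^ 2 by ring,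
    show edgeCount G = d * Fintype.card V / 2 by linarith [hreg.two_mul_edgeCount]]
  field_simp

end SimpleGraph

theorem exists_modularityOf_eq_modularity (G : SimpleGraph V) :
    ∃ P : Finpartition (univ : Finset V), modularityOf G P = modularity G := by
  have hS : {q : ℝ | ∃ P : Finpartition (univ : Finset V), q = modularityOf G P} =
      Set.range (modularityOf G) := by
    simp only [Set.range, eq_comm]
  rw [modularity, hS]
  exact (Set.range_nonempty _).csSup_mem (Set.finite_range _)

theorem statement0_general (G : SimpleGraph V) [DecidableRel G.Adj] (d n : ℕ)
    (hreg : G.IsRegularOfDegree d) (hn : n = Fintype.card V)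
    (hE : G.edgeFinset.Nonempty) (U : ℝ)
    (hU : ∀ A : Finset V, A.Nonempty →
      2 * edgesIn G A / ((d : ℝ) * A.card) - (A.card : ℝ) / n < U) :
    modularity G < U := by
  subst hn
  have hm : 0 < edgeCount G := by
    rw [G.edgeCount_eq_card_edgeFinset]; exact_mod_cast hE.card_pos
  have hn : 0 < Fintype.card V := by
    exact_mod_cast pos_of_mul_pos_right (hreg.mul_card_pos hm) (Nat.cast_nonneg d)
  obtain ⟨P, hP⟩ := exists_modularityOf_eq_modularity G
  have hV : (univ : Finset V) ≠ ⊥ := (univ_nonempty_iff.2 (Fintype.card_pos_iff.1 hn)).ne_empty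
  calc modularity G = ∑ A ∈ P.parts, (#A / Fintype.card V : ℝ) *
        (2 * edgesIn G A / (d * #A) - #A / Fintype.card V) := by
        rw [← hP, modularityOf]
        exact sum_congr rfl fun A hA => hreg.modularity_term_eq hm (P.nonempty_of_mem_parts hA)
    _ < ∑ A ∈ P.parts, (#A / Fintype.card V : ℝ) * U :=
        sum_lt_sum_of_nonempty (P.parts_nonempty hV) fun A hA =>
          have hA' := P.nonempty_of_mem_parts hA
          mul_lt_mul_of_pos_left (hU A hA') (by have := hA'.card_pos; positivity)
    _ = U := by
        rw [← sum_mul, ← sum_div, ← Nat.cast_sum, P.sum_card_parts, card_univ,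
          div_self (by positivity), one_mul]

/-- if `G` is a `d`-regular graph (`d ≥ 1`) on `n` vertices with at least one
edge, and every nonempty vertex subset `A` satisfies `2·e(A)/(d·|A|) − |A|/n < U`, then
`q*(G) < U`. -/
theorem statement0 (G : SimpleGraph V) [DecidableRel G.Adj] (d n : ℕ) (hd : 1 ≤ d)
    (hreg : G.IsRegularOfDegree d) (hn : n = Fintype.card V)
    (hE : G.edgeFinset.Nonempty) (U : ℝ)
    (hU : ∀ A : Finset V, A.Nonempty →
      2 * edgesIn G A / ((d : ℝ) * A.card) - (A.card : ℝ) / n < U) :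
    modularity G < U :=
  statement0_general G d n hreg hn hE U hU

end
end

section
/- Let d ≥ 3 and let G be any d-regular graph on n vertices. Then q*(G) ≤ λ(G)/d, where λ(G) = max(|λ₂|, |λ_n|) and λ₁ ≥ λ₂ ≥ … ≥ λ_n are the eigenvalues of the adjacency matrix of G. -/
/-!
For a part `B` with indicator vector `x`, the modularity term of `B` in a `d`-regular graph on `n`
vertices is `xᵀAx/(nd) - |B|²/n²`. Expand `x` in an orthonormal eigenbasis of `A`. All eigenvalues
are at most `d` (the Laplacian `dI - A` is positive semidefinite) and at most one exceeds
`λ ≥ λ₂`; if one does, the all-ones vector `𝟙`, an eigenvector for `d`, is a multiple of its basis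
vector. Hence `xᵀAx ≤ d⟨x, 𝟙⟩²/n + λ‖x‖² = d|B|²/n + λ|B|`, so each part contributes at most
`λ|B|/(nd)` and the parts sum to at most `λ/d`.
-/

open Finset

noncomputable section

variable {V : Type*} [Fintype V] [DecidableEq V]

open Matrix

namespace OrthonormalBasis
variable {ι : Type*} [Fintype ι]

theorem sum_dotProduct_mul_dotProduct (b : OrthonormalBasis ι ℝ (EuclideanSpace ℝ ι))
    (x y : ι → ℝ) : ∑ i, (⇑(b i) ⬝ᵥ x) * (⇑(b i) ⬝ᵥ y) = x ⬝ᵥ y := by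
  simpa [EuclideanSpace.inner_eq_star_dotProduct, dotProduct_comm] using
    b.sum_inner_mul_inner (WithLp.toLp 2 x) (WithLp.toLp 2 y)

end OrthonormalBasis

theorem sum_mul_sq_le_of_subsingleton {ι : Type*} [Fintype ι] {ev c t : ι → ℝ} {d lam : ℝ}
    (hd : 0 ≤ d) (hlam : 0 ≤ lam) (ht : t ⬝ᵥ t ≠ 0) (hevt : ∀ i, ev i * t i = d * t i)
    (hle : ∀ i, ev i ≤ d) (hsub : {i | lam < ev i}.Subsingleton) :
    ∑ i, ev i * c i ^ 2 ≤ d * (c ⬝ᵥ t) ^ 2 / (t ⬝ᵥ t) + lam * (c ⬝ᵥ c) := by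
  have hcc : c ⬝ᵥ c = ∑ i, c i ^ 2 := by simp only [dotProduct, sq]
  rcases hsub.eq_empty_or_singleton with hnone | ⟨i₀, hone⟩
  · have hev : ∀ i, ev i ≤ lam := fun i => not_lt.mp fun h => by
      simpa using hnone.subset (Set.mem_ofPred.mpr h)
    calc ∑ i, ev i * c i ^ 2 ≤ ∑ i, lam * c i ^ 2 :=
          sum_le_sum fun i _ => mul_le_mul_of_nonneg_right (hev i) (sq_nonneg _)
      _ = lam * (c ⬝ᵥ c) := by rw [hcc, mul_sum]
      _ ≤ _ := le_add_of_nonneg_left <| by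
          have htt : 0 ≤ t ⬝ᵥ t := by simpa using dotProduct_star_self_nonneg t
          positivity
  · have hev : ∀ i ≠ i₀, ev i ≤ lam := fun i hi => not_lt.mp fun h =>
      hi (by simpa using hone.subset (Set.mem_ofPred.mpr h))
    have hlt : lam < ev i₀ := (hone.symm.subset rfl : i₀ ∈ {i | lam < ev i})
    -- `t i ≠ 0` forces `ev i = d ≥ ev i₀ > lam`, hence `i = i₀`
    have hti : ∀ i ≠ i₀, t i = 0 := fun i hi => by
      by_contra h
      linarith [mul_right_cancel₀ h (hevt i), hle i₀, hev i hi]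
    have hct : c ⬝ᵥ t = c i₀ * t i₀ := Fintype.sum_eq_single i₀ fun i hi => by simp [hti i hi]
    have htt : t ⬝ᵥ t = t i₀ * t i₀ := Fintype.sum_eq_single i₀ fun i hi => by simp [hti i hi]
    have ht₀ : t i₀ ≠ 0 := fun h => ht (by simp [htt, h])
    have hproj : d * (c ⬝ᵥ t) ^ 2 / (t ⬝ᵥ t) = d * c i₀ ^ 2 := by
      rw [hct, htt]; field_simp
    rw [hproj, hcc, mul_sum]
    classical
    calc ∑ i, ev i * c i ^ 2 ≤ ∑ i, ((if i = i₀ then d * c i ^ 2 else 0) + lam * c i ^ 2) := by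
          refine sum_le_sum fun i _ => ?_
          split_ifs with h
          · subst h; nlinarith [hle i, sq_nonneg (c i)]
          · nlinarith [hev i h, sq_nonneg (c i)]
      _ = d * c i₀ ^ 2 + ∑ i, lam * c i ^ 2 := by rw [sum_add_distrib, Fintype.sum_ite_eq']

namespace Matrix.IsHermitian
variable {ι : Type*} [Fintype ι] [DecidableEq ι] {A : Matrix ι ι ℝ} (hA : A.IsHermitian)
include hA

theorem eigenvectorBasis_dotProduct_mulVec (i : ι) (x : ι → ℝ) :
    ⇑(hA.eigenvectorBasis i) ⬝ᵥ (A *ᵥ x) = hA.eigenvalues i * (⇑(hA.eigenvectorBasis i) ⬝ᵥ x) := by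
  have hAt : Aᵀ = A := by rw [← conjTranspose_eq_transpose_of_trivial]; exact hA
  rw [dotProduct_mulVec, ← mulVec_transpose, hAt, mulVec_eigenvectorBasis, smul_dotProduct,
    smul_eq_mul]

theorem dotProduct_mulVec_eq_sum_eigenvalues (x : ι → ℝ) :
    x ⬝ᵥ (A *ᵥ x) = ∑ i, hA.eigenvalues i * (⇑(hA.eigenvectorBasis i) ⬝ᵥ x) ^ 2 := by
  rw [← hA.eigenvectorBasis.sum_dotProduct_mul_dotProduct]
  simp only [hA.eigenvectorBasis_dotProduct_mulVec]
  exact Finset.sum_congr rfl fun i _ => by ring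

theorem eigenvalues_le_of_dotProduct_mulVec_le {d : ℝ} (h : ∀ x, x ⬝ᵥ (A *ᵥ x) ≤ d * (x ⬝ᵥ x))
    (i : ι) : hA.eigenvalues i ≤ d := by
  have hb : ⇑(hA.eigenvectorBasis i) ⬝ᵥ ⇑(hA.eigenvectorBasis i) = 1 := by
    have := inner_self_eq_one_of_norm_eq_one (𝕜 := ℝ) (hA.eigenvectorBasis.orthonormal.1 i)
    rwa [EuclideanSpace.inner_eq_star_dotProduct, star_trivial] at this
  simpa [hA.eigenvectorBasis_dotProduct_mulVec, hb] using h (hA.eigenvectorBasis i)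

theorem dotProduct_mulVec_le_of_subsingleton {u : ι → ℝ} {d lam : ℝ} (hd : 0 ≤ d)
    (hlam : 0 ≤ lam) (hu : u ≠ 0) (hAu : A *ᵥ u = d • u) (hle : ∀ i, hA.eigenvalues i ≤ d)
    (hsub : {i | lam < hA.eigenvalues i}.Subsingleton) (x : ι → ℝ) :
    x ⬝ᵥ (A *ᵥ x) ≤ d * (x ⬝ᵥ u) ^ 2 / (u ⬝ᵥ u) + lam * (x ⬝ᵥ x) := by
  have hcoord : ∀ y z : ι → ℝ, y ⬝ᵥ z =
      (fun i => ⇑(hA.eigenvectorBasis i) ⬝ᵥ y) ⬝ᵥ (fun i => ⇑(hA.eigenvectorBasis i) ⬝ᵥ z) :=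
    fun y z => (hA.eigenvectorBasis.sum_dotProduct_mul_dotProduct y z).symm
  rw [hA.dotProduct_mulVec_eq_sum_eigenvalues, hcoord x u, hcoord u u, hcoord x x]
  refine sum_mul_sq_le_of_subsingleton hd hlam ?_ (fun i => ?_) hle hsub
  · rw [← hcoord]
    exact mt dotProduct_self_eq_zero.mp hu
  · rw [← hA.eigenvectorBasis_dotProduct_mulVec, hAu, dotProduct_smul, smul_eq_mul]

end Matrix.IsHermitian

namespace SimpleGraph.IsRegularOfDegree
variable {G : SimpleGraph V} [DecidableRel G.Adj] {d : ℕ} (hreg : G.IsRegularOfDegree d)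
include hreg

omit [DecidableEq V] in
theorem adjMatrix_mulVec_one : G.adjMatrix ℝ *ᵥ (fun _ => 1) = (d : ℝ) • fun _ => 1 := by
  ext v
  simpa using adjMatrix_mulVec_const_apply_of_regular (a := (1 : ℝ)) hreg (v := v)

theorem dotProduct_adjMatrix_mulVec_le (x : V → ℝ) :
    x ⬝ᵥ (G.adjMatrix ℝ *ᵥ x) ≤ d * (x ⬝ᵥ x) := by
  have hL := (posSemidef_lapMatrix ℝ G).dotProduct_mulVec_nonneg x
  rw [star_trivial, lapMatrix, sub_mulVec, dotProduct_sub, dotProduct_mulVec_degMatrix] at hL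
  have hdeg : ∑ i, (G.degree i : ℝ) * x i * x i = d * (x ⬝ᵥ x) := by
    simp only [hreg _, dotProduct, mul_sum, mul_assoc]
  linarith

theorem eigenvalues_adjMatrix_le (hA : (G.adjMatrix ℝ).IsHermitian) (v : V) :
    hA.eigenvalues v ≤ d :=
  hA.eigenvalues_le_of_dotProduct_mulVec_le hreg.dotProduct_adjMatrix_mulVec_le v

omit [DecidableEq V] in
theorem degR_eq (v : V) : degR G v = d := by
  rw [degR, Nat.card_eq_fintype_card, card_neighborSet_eq_degree, hreg v]

omit [DecidableEq V] in
theorem two_mul_edgeCount_s2 : 2 * edgeCount G = Fintype.card V * d := by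
  have h := G.sum_degrees_eq_twice_card_edges
  simp only [hreg _, sum_const, card_univ, smul_eq_mul] at h
  rw [edgeCount, Nat.card_eq_fintype_card, ← edgeFinset_card]
  exact_mod_cast h.symm

end SimpleGraph.IsRegularOfDegree

theorem edgesIn_eq_dotProduct (G : SimpleGraph V) [DecidableRel G.Adj] (B : Finset V) :
    edgesIn G B = ((fun v => if v ∈ B then (1 : ℝ) else 0) ⬝ᵥ
      (G.adjMatrix ℝ *ᵥ fun v => if v ∈ B then (1 : ℝ) else 0)) / 2 := by
  rw [edgesIn, Nat.card_eq_fintype_card, Fintype.card_subtype, card_filter,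
    SimpleGraph.dotProduct_mulVec_adjMatrix, Fintype.sum_prod_type]
  push_cast
  congr 1
  refine sum_congr rfl fun i _ => sum_congr rfl fun j _ => ?_
  by_cases hij : G.Adj i j <;> by_cases hi : i ∈ B <;> by_cases hj : j ∈ B <;> simp [hij, hi, hj]

section Modularity
variable {G : SimpleGraph V} [DecidableRel G.Adj] {d : ℕ} (hreg : G.IsRegularOfDegree d)
  (hA : (G.adjMatrix ℝ).IsHermitian) {lam : ℝ} (hlam : 0 ≤ lam)
  (hsub : {v | lam < hA.eigenvalues v}.Subsingleton)
include hreg hlam hsub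

theorem modularity_term_le [Nonempty V] (B : Finset V) :
    edgesIn G B / edgeCount G - (∑ v ∈ B, degR G v) ^ 2 / (4 * edgeCount G ^ 2) ≤
      lam * #B / (Fintype.card V * d) := by
  have hm : edgeCount G = Fintype.card V * d / 2 := by linarith [hreg.two_mul_edgeCount_s2]
  rw [edgesIn_eq_dotProduct, hm, sum_congr rfl fun v _ => hreg.degR_eq v, sum_const, nsmul_eq_mul]
  set x : V → ℝ := fun v => if v ∈ B then 1 else 0
  set q := x ⬝ᵥ (G.adjMatrix ℝ *ᵥ x)
  have hquad : q ≤ d * #B ^ 2 / Fintype.card V + lam * #B := by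
    have hx1 : x ⬝ᵥ (fun _ => 1) = #B := by simp [x, dotProduct]
    have hxx : x ⬝ᵥ x = #B := by simp [x, dotProduct]
    have h11 : (fun _ : V => (1 : ℝ)) ⬝ᵥ (fun _ => 1) = Fintype.card V := by simp [dotProduct]
    simpa only [hx1, hxx, h11] using hA.dotProduct_mulVec_le_of_subsingleton (Nat.cast_nonneg d)
      hlam (Function.ne_iff.mpr ⟨Classical.arbitrary V, one_ne_zero⟩) hreg.adjMatrix_mulVec_one
      (hreg.eigenvalues_adjMatrix_le hA) hsub x
  have hsplit : q / 2 / (Fintype.card V * d / 2) - (#B * d) ^ 2 / (4 * (Fintype.card V * d / 2) ^ 2)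
      = (q - (d * #B ^ 2 / Fintype.card V + lam * #B)) / (Fintype.card V * d) +
        lam * #B / (Fintype.card V * d) := by
    field_simp
    ring
  have hslack : (q - (d * #B ^ 2 / Fintype.card V + lam * #B)) / (Fintype.card V * d) ≤ 0 :=
    div_nonpos_of_nonpos_of_nonneg (by linarith) (by positivity)
  linarith

theorem modularityOf_le (P : Finpartition (univ : Finset V)) :
    modularityOf G P ≤ lam / d := by
  calc modularityOf G P ≤ ∑ B ∈ P.parts, lam * #B / (Fintype.card V * d) :=
        sum_le_sum fun B hB =>
          have : Nonempty V := (P.nonempty_of_mem_parts hB).to_type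
          modularity_term_le hreg hA hlam hsub B
    _ = lam / d * (Fintype.card V / Fintype.card V) := by
        rw [← sum_div, ← mul_sum, ← Nat.cast_sum, P.sum_card_parts, card_univ]
        ring
    _ ≤ lam / d := mul_le_of_le_one_right (by positivity) (div_self_le_one _)

theorem modularity_le : modularity G ≤ lam / d :=
  Real.sSup_le (by rintro _ ⟨P, rfl⟩; exact modularityOf_le hreg hA hlam hsub P) (by positivity)

end Modularity

theorem setOf_lt_subsingleton_of_antitoneOn {α : Type*} {n : ℕ} {μ : ℕ → ℝ}
    (hμ : AntitoneOn μ (Set.Icc 1 n)) {f : α → ℝ} (e : α ≃ Fin n)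
    (he : ∀ a, f a = μ ((e a : ℕ) + 1)) : {a | μ 2 < f a}.Subsingleton := by
  have htop : ∀ a, μ 2 < f a → (e a : ℕ) = 0 := fun a ha => by
    by_contra h
    have := (e a).2
    exact ha.not_ge (he a ▸ hμ ⟨by omega, by omega⟩ ⟨by omega, by omega⟩ (by omega))
  exact fun a ha b hb => e.injective (Fin.ext ((htop a ha).trans (htop b hb).symm))

theorem statement2_general (G : SimpleGraph V) [DecidableRel G.Adj] (d n : ℕ)
    (hreg : G.IsRegularOfDegree d)
    (hA : (G.adjMatrix ℝ).IsHermitian) (μ : ℕ → ℝ)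
    (hsorted : AntitoneOn μ (Set.Icc 1 n))
    (henum : ∃ e : V ≃ Fin n, ∀ v : V, hA.eigenvalues v = μ ((e v : ℕ) + 1)) :
    modularity G ≤ max |μ 2| |μ n| / d := by
  obtain ⟨e, he⟩ := henum
  have hsub : {v | max |μ 2| |μ n| < hA.eigenvalues v}.Subsingleton :=
    (setOf_lt_subsingleton_of_antitoneOn hsorted e he).anti <| Set.ofPred_subset_ofPred.mpr
      fun _ => ((le_abs_self _).trans (le_max_left _ _)).trans_lt
  exact modularity_le hreg hA (le_max_of_le_left (abs_nonneg _)) hsub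

/-- if `G` is a `d`-regular graph (`d ≥ 3`) on `n` vertices and
`μ 1 ≥ μ 2 ≥ … ≥ μ n` is the (weakly decreasing) enumeration of the eigenvalues of the
adjacency matrix of `G` (with multiplicity), then `q*(G) ≤ max(|μ 2|, |μ n|)/d`. -/
theorem statement2 (G : SimpleGraph V) [DecidableRel G.Adj] (d n : ℕ) (hd : 3 ≤ d)
    (hreg : G.IsRegularOfDegree d) (hn : n = Fintype.card V)
    (hA : (G.adjMatrix ℝ).IsHermitian) (μ : ℕ → ℝ)
    (hsorted : AntitoneOn μ (Set.Icc 1 n))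
    (henum : ∃ e : V ≃ Fin n, ∀ v : V, hA.eigenvalues v = μ ((e v : ℕ) + 1)) :
    modularity G ≤ max |μ 2| |μ n| / d :=
  statement2_general G d n hreg hA μ hsorted henum

end
end

section
/- Let G be a connected graph with at least one edge, let Δ ≥ 1 be its maximum degree, and let h be a real number with h ≥ Δ and h/Δ − 1 ≤ vol_G(V(G)). Then there is a partition of V(G) into parts A₁, …, A_k such that each A_i induces a connected subgraph of G and h/Δ − 1 ≤ vol_G(A_i) ≤ h for every 1 ≤ i ≤ k. -/
set_option linter.unusedSectionVars false
set_option linter.unusedVariables false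


open Finset

noncomputable section

variable {V : Type*} [Fintype V] [DecidableEq V]

/-- `vol_G(A) = Σ_{v ∈ A} deg_G(v)`, as a real number. -/
noncomputable def volOf (G : SimpleGraph V) [DecidableRel G.Adj] (A : Finset V) : ℝ :=
  ∑ v ∈ A, (G.degree v : ℝ)

namespace S6

variable {V : Type*} [Fintype V] [DecidableEq V] (G : SimpleGraph V) [DecidableRel G.Adj]

/-- reachability within a finset `A` (support of the walk stays in `A`). -/
def R (A : Finset V) (x y : V) : Prop := ∃ p : G.Walk x y, ∀ z ∈ p.support, z ∈ A

/-- connectivity of the subgraph induced on a finset, phrased via walks in `G`. -/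
def FConn (A : Finset V) : Prop :=
  A.Nonempty ∧ ∀ ⦃x⦄, x ∈ A → ∀ ⦃y⦄, y ∈ A → R G A x y

variable {G}

lemma R.mem_left {A : Finset V} {x y : V} (h : R G A x y) : x ∈ A := by
  obtain ⟨p, hp⟩ := h; exact hp _ p.start_mem_support

lemma R.mem_right {A : Finset V} {x y : V} (h : R G A x y) : y ∈ A := by
  obtain ⟨p, hp⟩ := h; exact hp _ p.end_mem_support

lemma R.refl {A : Finset V} {x : V} (hx : x ∈ A) : R G A x x :=
  ⟨SimpleGraph.Walk.nil, by simp [hx]⟩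

lemma R.symm {A : Finset V} {x y : V} (h : R G A x y) : R G A y x := by
  obtain ⟨p, hp⟩ := h
  exact ⟨p.reverse, by simpa using hp⟩

lemma R.trans {A : Finset V} {x y z : V} (h : R G A x y) (h' : R G A y z) : R G A x z := by
  obtain ⟨p, hp⟩ := h
  obtain ⟨q, hq⟩ := h'
  refine ⟨p.append q, fun w hw => ?_⟩
  rw [SimpleGraph.Walk.mem_support_append_iff] at hw
  exact hw.elim (hp w) (hq w)

lemma R.mono {A B : Finset V} (hAB : A ⊆ B) {x y : V} (h : R G A x y) : R G B x y := by
  obtain ⟨p, hp⟩ := h; exact ⟨p, fun z hz => hAB (hp z hz)⟩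

lemma R.of_adj {A : Finset V} {x y : V} (hx : x ∈ A) (hy : y ∈ A) (h : G.Adj x y) :
    R G A x y :=
  ⟨SimpleGraph.Walk.cons h SimpleGraph.Walk.nil, by simp [hx, hy]⟩

end S6

namespace S6X
open S6 SimpleGraph
variable {V : Type*} [Fintype V] [DecidableEq V] {G : SimpleGraph V} [DecidableRel G.Adj]

/-- the connected component of `x` inside the finset `A`. -/
noncomputable def comp (G : SimpleGraph V) (A : Finset V) (x : V) : Finset V :=
  @Finset.filter _ (fun y => R G A x y) (Classical.decPred _) A

lemma mem_comp {A : Finset V} {x y : V} : y ∈ comp G A x ↔ y ∈ A ∧ R G A x y := by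
  simp [comp]

lemma comp_subset {A : Finset V} {x : V} : comp G A x ⊆ A := fun y hy => (mem_comp.1 hy).1

lemma mem_comp_self {A : Finset V} {x : V} (hx : x ∈ A) : x ∈ comp G A x :=
  mem_comp.2 ⟨hx, R.refl hx⟩

lemma comp_eq_of_mem {A : Finset V} {x y : V} (hy : y ∈ comp G A x) :
    comp G A y = comp G A x := by
  obtain ⟨_, hxy⟩ := mem_comp.1 hy
  ext z
  simp only [mem_comp]
  exact ⟨fun ⟨hz, hr⟩ => ⟨hz, hxy.trans hr⟩, fun ⟨hz, hr⟩ => ⟨hz, (hxy.symm).trans hr⟩⟩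

lemma comp_disj {A : Finset V} {x y : V} (h : comp G A x ≠ comp G A y) :
    Disjoint (comp G A x) (comp G A y) := by
  rw [Finset.disjoint_left]
  intro z hzx hzy
  exact h ((comp_eq_of_mem hzx).symm.trans (comp_eq_of_mem hzy))

/-- a walk within `A` starting at `x` stays inside `comp G A x`. -/
lemma R_to_comp {A : Finset V} {x y : V} (h : R G A x y) : R G (comp G A x) x y := by
  obtain ⟨p, hp⟩ := h
  refine ⟨p, fun z hz => mem_comp.2 ⟨hp z hz, ⟨p.takeUntil z hz, fun w hw =>
    hp w (p.support_takeUntil_subset hz hw)⟩⟩⟩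

lemma fconn_comp {A : Finset V} {x : V} (hx : x ∈ A) : FConn G (comp G A x) := by
  refine ⟨⟨x, mem_comp_self hx⟩, fun u hu v hv => ?_⟩
  obtain ⟨_, hxu⟩ := mem_comp.1 hu
  obtain ⟨_, hxv⟩ := mem_comp.1 hv
  have huv : R G A u v := hxu.symm.trans hxv
  have := R_to_comp huv
  rwa [comp_eq_of_mem hu] at this

end S6X

namespace S6Y
open S6 S6X SimpleGraph
variable {V : Type*} [Fintype V] [DecidableEq V] {G : SimpleGraph V} [DecidableRel G.Adj]

lemma fconn_induce {A : Finset V} (h : FConn G A) : (G.induce (A : Set V)).Connected := by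
  obtain ⟨hne, hR⟩ := h
  rw [SimpleGraph.connected_induce_iff, SimpleGraph.Subgraph.connected_iff_forall_exists_walk_subgraph]
  refine ⟨by simpa using hne, fun {u v} hu hv => ?_⟩
  simp only [Subgraph.induce_verts, Finset.mem_coe] at hu hv
  obtain ⟨p, hp⟩ := hR hu hv
  refine ⟨p, ⟨?_, ?_⟩⟩
  · intro z hz
    rw [SimpleGraph.Walk.verts_toSubgraph] at hz
    exact hp z hz
  · intro a b hab
    have hG := p.toSubgraph.adj_sub hab
    have ha : a ∈ p.toSubgraph.verts := p.toSubgraph.edge_vert hab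
    have hb : b ∈ p.toSubgraph.verts := p.toSubgraph.edge_vert hab.symm
    rw [SimpleGraph.Walk.verts_toSubgraph] at ha hb
    rw [SimpleGraph.Subgraph.induce_adj]
    exact ⟨hp a ha, hp b hb, hG⟩

lemma fconn_univ (h : G.Connected) : FConn G (Finset.univ : Finset V) := by
  have : Nonempty V := h.nonempty
  refine ⟨Finset.univ_nonempty, fun x _ y _ => ?_⟩
  obtain ⟨p⟩ := h.preconnected x y
  exact ⟨p, fun z _ => Finset.mem_univ z⟩

lemma fconn_union_adj {s t : Finset V} {x y : V} (hs : FConn G s) (ht : FConn G t)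
    (hx : x ∈ s) (hy : y ∈ t) (hxy : G.Adj x y) : FConn G (s ∪ t) := by
  obtain ⟨hsne, hsR⟩ := hs
  obtain ⟨htne, htR⟩ := ht
  have key : ∀ ⦃u⦄, u ∈ s ∪ t → R G (s ∪ t) u x := by
    intro u hu
    rcases Finset.mem_union.1 hu with h | h
    · exact (hsR h hx).mono Finset.subset_union_left
    · exact (((htR h hy).mono Finset.subset_union_right).trans
        (R.of_adj (Finset.mem_union_right _ hy) (Finset.mem_union_left _ hx) hxy.symm))
  exact ⟨hsne.mono Finset.subset_union_left,
    fun u hu v hv => (key hu).trans (key hv).symm⟩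

end S6Y

namespace S6Z
open S6 S6X S6Y SimpleGraph
variable {V : Type*} [Fintype V] [DecidableEq V] {G : SimpleGraph V} [DecidableRel G.Adj]

lemma exists_nbr_aux {A : Finset V} {r : V} :
    ∀ {x : V} (p : G.Walk x r), (∀ z ∈ p.support, z ∈ A) → x ≠ r →
      ∃ y ∈ A.erase r, G.Adj r y ∧ R G (A.erase r) x y := by
  intro x p
  induction p with
  | nil => intro _ hxr; exact absurd rfl hxr
  | @cons a b c hab q ih =>
    intro hsupp hxr
    have ha : a ∈ A := hsupp a (by simp)
    have hb : b ∈ A := hsupp b (by simp)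
    by_cases hbr : b = c
    · subst hbr
      exact ⟨a, Finset.mem_erase.2 ⟨hxr, ha⟩, hab.symm, R.refl (Finset.mem_erase.2 ⟨hxr, ha⟩)⟩
    · obtain ⟨y, hy, hadj, hR⟩ := ih (fun z hz => hsupp z (by simp [Walk.support_cons, hz])) hbr
      have hab' : R G (A.erase c) a b :=
        R.of_adj (Finset.mem_erase.2 ⟨hxr, ha⟩) (Finset.mem_erase.2 ⟨hbr, hb⟩) hab
      exact ⟨y, hy, hadj, hab'.trans hR⟩

lemma exists_nbr {A : Finset V} {r : V} (hr : r ∈ A) (hA : FConn G A) {x : V}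
    (hx : x ∈ A.erase r) :
    ∃ y ∈ A.erase r, G.Adj r y ∧ R G (A.erase r) x y := by
  obtain ⟨hxr, hxA⟩ := Finset.mem_erase.1 hx
  obtain ⟨p, hp⟩ := hA.2 hxA hr
  exact exists_nbr_aux p hp hxr

lemma vol_nonneg {A : Finset V} : 0 ≤ volOf G A := by
  unfold volOf; positivity

lemma vol_sdiff {A B : Finset V} (h : B ⊆ A) : volOf G (A \ B) = volOf G A - volOf G B := by
  unfold volOf
  rw [eq_sub_iff_add_eq, Finset.sum_sdiff h]

lemma vol_erase {A : Finset V} {r : V} (hr : r ∈ A) :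
    volOf G A = (G.degree r : ℝ) + volOf G (A.erase r) := by
  unfold volOf
  rw [← Finset.add_sum_erase _ _ hr]

end S6Z

namespace S6K
open S6 S6X S6Y S6Z SimpleGraph
variable {V : Type*} [Fintype V] [DecidableEq V] {G : SimpleGraph V} [DecidableRel G.Adj]

lemma key (Δ : ℕ) (h : ℝ) (hd : ∀ v : V, (G.degree v : ℝ) ≤ Δ) (hc : 0 ≤ h / Δ - 1) :
    ∀ n : ℕ, ∀ A : Finset V, ∀ r : V, A.card ≤ n → r ∈ A → FConn G A →
      h / Δ - 1 ≤ volOf G A →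
      volOf G A ≤ Δ + ((A.filter (fun y => G.Adj r y)).card : ℝ) * (h / Δ - 1) ∨
      ∃ B ⊆ A, B.Nonempty ∧ r ∉ B ∧ FConn G B ∧ FConn G (A \ B) ∧
        h / Δ - 1 ≤ volOf G B ∧ volOf G B ≤ Δ + ((Δ : ℝ) - 1) * (h / Δ - 1) := by
  intro n
  induction n with
  | zero =>
    intro A r hcard hr _ _
    simp only [Nat.le_zero, Finset.card_eq_zero] at hcard
    subst hcard; exact absurd hr (by simp)
  | succ n ih =>
    intro A r hcard hr hA hvol
    set c : ℝ := h / Δ - 1 with hcdef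
    set A' : Finset V := A.erase r with hA'def
    set 𝒞 : Finset (Finset V) := A'.image (fun x => comp G A' x) with h𝒞def
    have compsub : ∀ C ∈ 𝒞, C ⊆ A' := by
      intro C hC
      obtain ⟨x, _, rfl⟩ := Finset.mem_image.1 hC
      exact comp_subset
    have hCeq : ∀ C ∈ 𝒞, ∀ y ∈ C, C = comp G A' y := by
      intro C hC y hy
      obtain ⟨x, _, rfl⟩ := Finset.mem_image.1 hC
      exact (comp_eq_of_mem hy).symm
    have hbiU : 𝒞.biUnion id = A' := by
      ext z
      simp only [Finset.mem_biUnion, id]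
      constructor
      · rintro ⟨C, hC, hz⟩; exact compsub C hC hz
      · intro hz; exact ⟨comp G A' z, Finset.mem_image_of_mem _ hz, mem_comp_self hz⟩
    have hdisj : (↑𝒞 : Set (Finset V)).PairwiseDisjoint id := by
      intro C hC D hD hne
      simp only [Finset.mem_coe] at hC hD
      obtain ⟨x, _, rfl⟩ := Finset.mem_image.1 hC
      obtain ⟨y, _, rfl⟩ := Finset.mem_image.1 hD
      exact comp_disj hne
    have hsum : ∑ C ∈ 𝒞, volOf G C = volOf G A' := by
      rw [← hbiU]
      exact (Finset.sum_biUnion hdisj).symm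
    have hvolA : volOf G A = (G.degree r : ℝ) + volOf G A' := vol_erase hr
    have hnbr : ∀ C ∈ 𝒞, ∃ y ∈ C, G.Adj r y := by
      intro C hC
      obtain ⟨x, hx, rfl⟩ := Finset.mem_image.1 hC
      obtain ⟨y, hy, hadj, hRy⟩ := exists_nbr hr hA hx
      exact ⟨y, mem_comp.2 ⟨hy, hRy⟩, hadj⟩
    have hcard𝒞 : 𝒞.card ≤ (A.filter (fun y => G.Adj r y)).card := by
      have : Nonempty V := ⟨r⟩
      choose! f hf1 hf2 using hnbr
      refine Finset.card_le_card_of_injOn f (fun C hC => ?_) ?_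
      · exact Finset.mem_filter.2
          ⟨Finset.erase_subset _ _ (compsub C hC (hf1 C hC)), hf2 C hC⟩
      · intro C hC D hD hfeq
        simp only [Finset.mem_coe] at hC hD
        rw [hCeq C hC _ (hf1 C hC), hCeq D hD _ (hf1 D hD), hfeq]
    by_cases hbig : ∃ C ∈ 𝒞, c ≤ volOf G C
    · -- some big component: recurse into it
      obtain ⟨C, hC𝒞, hCvol⟩ := hbig
      have hCA' : C ⊆ A' := compsub C hC𝒞
      have hCA : C ⊆ A := hCA'.trans (Finset.erase_subset _ _)
      have hrC : r ∉ C := fun hrc => (Finset.mem_erase.1 (hCA' hrc)).1 rfl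
      obtain ⟨r', hr'C, hadj'⟩ := hnbr C hC𝒞
      have hfC : FConn G C := by
        obtain ⟨x, hx, rfl⟩ := Finset.mem_image.1 hC𝒞
        exact fconn_comp hx
      have hCn : C.card ≤ n := by
        have h1 : A'.card = A.card - 1 := Finset.card_erase_of_mem hr
        have h2 : C.card ≤ A'.card := Finset.card_le_card hCA'
        have h3 : 1 ≤ A.card := Finset.card_pos.2 ⟨r, hr⟩
        omega
      -- A \ C is connected
      have hRAC : ∀ ⦃x⦄, x ∈ A \ C → R G (A \ C) x r := by
        intro x hx
        obtain ⟨hxA, hxC⟩ := Finset.mem_sdiff.1 hx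
        have hrAC : r ∈ A \ C := Finset.mem_sdiff.2 ⟨hr, hrC⟩
        by_cases hxr : x = r
        · subst hxr; exact R.refl hrAC
        · have hxA' : x ∈ A' := Finset.mem_erase.2 ⟨hxr, hxA⟩
          obtain ⟨y, hy, hadjy, hRy⟩ := exists_nbr hr hA hxA'
          have hcompsub : comp G A' x ⊆ A \ C := by
            intro z hz
            refine Finset.mem_sdiff.2 ⟨Finset.erase_subset _ _ (comp_subset hz), fun hzC => ?_⟩
            have e1 : C = comp G A' z := hCeq C hC𝒞 z hzC
            have e2 : comp G A' z = comp G A' x := comp_eq_of_mem hz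
            exact hxC (e1.symm ▸ e2 ▸ mem_comp_self (Finset.mem_erase.2 ⟨hxr, hxA⟩) : x ∈ C)
          have hRy' : R G (A \ C) x y := (R_to_comp hRy).mono hcompsub
          have hyAC : y ∈ A \ C := hcompsub (mem_comp.2 ⟨hy, hRy⟩)
          exact hRy'.trans (R.of_adj hyAC hrAC hadjy.symm)
      have hconnAC : FConn G (A \ C) :=
        ⟨⟨r, Finset.mem_sdiff.2 ⟨hr, hrC⟩⟩, fun u hu v hv => (hRAC hu).trans (hRAC hv).symm⟩
      rcases ih C r' hCn hr'C hfC hCvol with hleft | hright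
      · -- whole C is a good piece
        right
        have hfilt : ((C.filter (fun y => G.Adj r' y)).card : ℝ) ≤ (Δ : ℝ) - 1 := by
          have hsub : C.filter (fun y => G.Adj r' y) ⊆ (G.neighborFinset r').erase r := by
            intro z hz
            obtain ⟨hzC, hzadj⟩ := Finset.mem_filter.1 hz
            exact Finset.mem_erase.2 ⟨fun hzr => hrC (hzr ▸ hzC), by simpa using hzadj⟩
          have h1 : (C.filter (fun y => G.Adj r' y)).card ≤ G.degree r' - 1 := by
            have := Finset.card_le_card hsub
            rwa [Finset.card_erase_of_mem (by simpa using hadj'.symm),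
              SimpleGraph.card_neighborFinset_eq_degree] at this
          have h2 : 1 ≤ G.degree r' := by
            rw [← SimpleGraph.card_neighborFinset_eq_degree]
            exact Finset.card_pos.2 ⟨r, by simpa using hadj'.symm⟩
          have h3 : (C.filter (fun y => G.Adj r' y)).card + 1 ≤ G.degree r' := by omega
          have h4 : ((C.filter (fun y => G.Adj r' y)).card : ℝ) + 1 ≤ (G.degree r' : ℝ) := by
            exact_mod_cast h3
          linarith [hd r']
        refine ⟨C, hCA, ⟨r', hr'C⟩, hrC, hfC, hconnAC, hCvol, ?_⟩
        calc volOf G C ≤ Δ + ((C.filter (fun y => G.Adj r' y)).card : ℝ) * c := hleft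
          _ ≤ Δ + ((Δ : ℝ) - 1) * c := by
              have := mul_le_mul_of_nonneg_right hfilt hc
              linarith
      · -- recurse: B inside C
        obtain ⟨B, hBC, hBne, hr'B, hfB, hfCB, hlow, hup⟩ := hright
        right
        have hBA : B ⊆ A := hBC.trans hCA
        have hrB : r ∉ B := fun hrb => hrC (hBC hrb)
        have hsplit : A \ B = (A \ C) ∪ (C \ B) := by
          ext z
          simp only [Finset.mem_sdiff, Finset.mem_union]
          constructor
          · rintro ⟨hzA, hzB⟩
            by_cases hzC : z ∈ C
            · exact Or.inr ⟨hzC, hzB⟩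
            · exact Or.inl ⟨hzA, hzC⟩
          · rintro (⟨hzA, hzC⟩ | ⟨hzC, hzB⟩)
            · exact ⟨hzA, fun hzB => hzC (hBC hzB)⟩
            · exact ⟨hCA hzC, hzB⟩
        have hfAB : FConn G (A \ B) := by
          rw [hsplit]
          exact fconn_union_adj hconnAC hfCB (Finset.mem_sdiff.2 ⟨hr, hrC⟩)
            (Finset.mem_sdiff.2 ⟨hr'C, hr'B⟩) hadj'
        exact ⟨B, hBA, hBne, hrB, hfB, hfAB, hlow, hup⟩
    · -- all components are small: whole A is small
      left
      push_neg at hbig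
      have hsmall : ∑ C ∈ 𝒞, volOf G C ≤ (𝒞.card : ℝ) * c := by
        calc ∑ C ∈ 𝒞, volOf G C ≤ ∑ _C ∈ 𝒞, c :=
              Finset.sum_le_sum fun C hC => le_of_lt (hbig C hC)
          _ = (𝒞.card : ℝ) * c := by rw [Finset.sum_const, nsmul_eq_mul]
      have : volOf G A ≤ (Δ : ℝ) + (𝒞.card : ℝ) * c := by
        rw [hvolA, ← hsum]
        exact add_le_add (hd r) hsmall
      refine this.trans (add_le_add_right ?_ _)
      exact mul_le_mul_of_nonneg_right (by exact_mod_cast hcard𝒞) hc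

end S6K

namespace S6M
open S6 S6X S6Y S6Z S6K SimpleGraph
variable {V : Type*} [Fintype V] [DecidableEq V] {G : SimpleGraph V} [DecidableRel G.Adj]

lemma main (Δ : ℕ) (h : ℝ) (hd : ∀ v : V, (G.degree v : ℝ) ≤ Δ) (hΔ1 : 1 ≤ Δ)
    (hh : (Δ : ℝ) ≤ h) :
    ∀ n : ℕ, ∀ S : Finset V, S.card ≤ n → FConn G S → h / Δ - 1 ≤ volOf G S →
      ∃ Pp : Finset (Finset V), Pp.biUnion id = S ∧ (↑Pp : Set (Finset V)).PairwiseDisjoint id ∧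
        ∀ A ∈ Pp, FConn G A ∧ h / Δ - 1 ≤ volOf G A ∧ volOf G A ≤ h := by
  have hΔ0 : (0 : ℝ) < Δ := by exact_mod_cast hΔ1
  have hc : 0 ≤ h / Δ - 1 := by
    have : (1 : ℝ) ≤ h / Δ := (le_div_iff₀ hΔ0).2 (by linarith)
    linarith
  have hid : (Δ : ℝ) + (Δ : ℝ) * (h / Δ - 1) = h := by
    field_simp
    ring
  intro n
  induction n with
  | zero =>
    intro S hcard hS _
    simp only [Nat.le_zero, Finset.card_eq_zero] at hcard
    exact absurd (hcard ▸ hS.1) (by simp)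
  | succ n ih =>
    intro S hcard hS hvol
    by_cases hle : volOf G S ≤ h
    · refine ⟨{S}, by simp, by simp, ?_⟩
      intro A hA
      rw [Finset.mem_singleton] at hA
      subst hA
      exact ⟨hS, hvol, hle⟩
    · push_neg at hle
      obtain ⟨r, hr⟩ := hS.1
      rcases key Δ h hd hc S.card S r le_rfl hr hS hvol with hleft | hright
      · exfalso
        have hfilt : ((S.filter (fun y => G.Adj r y)).card : ℝ) ≤ (Δ : ℝ) := by
          have hsub : S.filter (fun y => G.Adj r y) ⊆ G.neighborFinset r := by
            intro z hz
            simpa using (Finset.mem_filter.1 hz).2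
          have := Finset.card_le_card hsub
          rw [SimpleGraph.card_neighborFinset_eq_degree] at this
          exact le_trans (by exact_mod_cast this) (hd r)
        have : volOf G S ≤ (Δ : ℝ) + (Δ : ℝ) * (h / Δ - 1) :=
          hleft.trans (add_le_add_right (mul_le_mul_of_nonneg_right hfilt hc) _)
        rw [hid] at this
        linarith
      · obtain ⟨B, hBS, hBne, _, hfB, hfSB, hlow, hup⟩ := hright
        have hupB : volOf G B ≤ h - (h / Δ - 1) := by
          have : (Δ : ℝ) + ((Δ : ℝ) - 1) * (h / Δ - 1) = h - (h / Δ - 1) := by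
            field_simp; ring
          linarith [hup, this ▸ hup]
        have hvolSB : h / Δ - 1 ≤ volOf G (S \ B) := by
          rw [vol_sdiff hBS]
          linarith
        have hcardSB : (S \ B).card ≤ n := by
          have h1 : (S \ B).card < S.card :=
            Finset.card_lt_card (Finset.sdiff_ssubset hBS hBne)
          omega
        obtain ⟨Ps, hU, hD, hP⟩ := ih (S \ B) hcardSB hfSB hvolSB
        refine ⟨insert B Ps, ?_, ?_, ?_⟩
        · rw [Finset.biUnion_insert, hU, id]
          exact Finset.union_sdiff_of_subset hBS
        · rw [Finset.coe_insert]
          refine hD.insert fun C hC _ => ?_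
          have hCsub : C ⊆ S \ B := hU ▸ Finset.subset_biUnion_of_mem id hC
          exact Finset.disjoint_right.2 fun a haC haB =>
            (Finset.mem_sdiff.1 (hCsub haC)).2 haB
        · intro A hA
          rcases Finset.mem_insert.1 hA with rfl | hA'
          · exact ⟨hfB, hlow, by linarith⟩
          · exact hP A hA'

end S6M


/-- if `G` is a connected graph with at least one edge, `Δ ≥ 1` is its
maximum degree, and `h` is a real number with `h ≥ Δ` and `h/Δ − 1 ≤ vol_G(V(G))`, then
there is a partition of `V(G)` into parts, each inducing a connected subgraph, whose
volumes all lie in `[h/Δ − 1, h]`. -/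
theorem statement6 (G : SimpleGraph V) [DecidableRel G.Adj]
    (hconn : G.Connected) (hE : G.edgeFinset.Nonempty)
    (Δ : ℕ) (hΔ : Δ = G.maxDegree) (hΔ1 : 1 ≤ Δ)
    (h : ℝ) (hh : (Δ : ℝ) ≤ h) (hvol : h / Δ - 1 ≤ volOf G Finset.univ) :
    ∃ P : Finpartition (Finset.univ : Finset V), ∀ A ∈ P.parts,
      (G.induce (A : Set V)).Connected ∧
        h / Δ - 1 ≤ volOf G A ∧ volOf G A ≤ h := by
  have hd : ∀ v : V, (G.degree v : ℝ) ≤ Δ := by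
    intro v
    exact_mod_cast hΔ ▸ G.degree_le_maxDegree v
  obtain ⟨Ps, hU, hD, hP⟩ := S6M.main Δ h hd hΔ1 hh (Finset.univ : Finset V).card
    Finset.univ le_rfl (S6Y.fconn_univ hconn) hvol
  refine ⟨⟨Ps, Finset.supIndep_iff_pairwiseDisjoint.2 hD, ?_, ?_⟩, ?_⟩
  · rw [Finset.sup_eq_biUnion, hU]
  · intro hbot
    exact absurd (hP _ hbot).1.1 (by simp)
  · intro A hA
    obtain ⟨hfA, h1, h2⟩ := hP A hA
    exact ⟨S6Y.fconn_induce hfA, h1, h2⟩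

end
end

section
/- Let m ≥ 1 and let G be a graph on n vertices with exactly mn edges in which every vertex has degree at least m. Then q*(G) ≤ max{ 15/16, 1 − ρ(G)/(2m) }, where ρ(G) is the edge expansion of G. -/
/-!
Write `e = |E(G)| = mn` and `vol(A) = Σ_{v ∈ A} deg(v)`. Since `2e(A) + e(A, V∖A) = vol(A)` and the
volumes of the parts add up to `2e`, every partition satisfies
`q_𝒜(G) = 1 - Σ_A e(A, V∖A) / (2e) - Σ_A vol(A)² / (4e²)`.
If some part has `vol(A) ≥ e/2`, its last term alone is at least `1/16`. Otherwise every part has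
`m|A| ≤ vol(A) < mn/2`, so `|A| < n/2` and `e(A, V∖A) ≥ ρ|A|`; summing over the parts, the cut term
is at least `ρn / (2mn) = ρ / (2m)`.
-/

open Finset

noncomputable section

variable {V : Type*} [Fintype V] [DecidableEq V]

/-- `e(S, V∖S)`: the number of edges of `G` with one endpoint in `S` and the other
outside `S`. -/
def cutEdges (G : SimpleGraph V) [DecidableRel G.Adj] (S : Finset V) : ℕ :=
  (Finset.univ.filter
    (fun p : V × V => G.Adj p.1 p.2 ∧ p.1 ∈ S ∧ p.2 ∉ S)).card

/-- The edge expansion `ρ(G) = min{ e(S, V∖S)/|S| : S ⊆ V(G), 1 ≤ |S| ≤ |V(G)|/2 }`. -/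
noncomputable def edgeExpansion (G : SimpleGraph V) [DecidableRel G.Adj] : ℝ :=
  sInf {r : ℝ | ∃ S : Finset V, S.Nonempty ∧ (S.card : ℝ) ≤ (Fintype.card V : ℝ) / 2 ∧
    r = (cutEdges G S : ℝ) / (S.card : ℝ)}

def vol (G : SimpleGraph V) (A : Finset V) : ℝ := ∑ v ∈ A, degR G v

omit [Fintype V] [DecidableEq V] in
lemma edgeCount_nonneg (G : SimpleGraph V) : 0 ≤ edgeCount G := Nat.cast_nonneg _

section Counting

variable (G : SimpleGraph V) [DecidableRel G.Adj]

omit [DecidableEq V] in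
lemma degR_eq_degree (v : V) : degR G v = G.degree v := by
  rw [degR, Nat.card_eq_fintype_card, G.card_neighborSet_eq_degree]

omit [DecidableEq V] in
lemma edgeCount_eq_card_edgeFinset : edgeCount G = #G.edgeFinset := by
  rw [edgeCount, Nat.card_eq_fintype_card, SimpleGraph.edgeFinset_card]

lemma card_adj_fst_mem (A : Finset V) :
    #{p : V × V | G.Adj p.1 p.2 ∧ p.1 ∈ A} = ∑ v ∈ A, G.degree v := by
  have : ({p : V × V | G.Adj p.1 p.2 ∧ p.1 ∈ A} : Finset (V × V)) =
      {p ∈ A ×ˢ (univ : Finset V) | G.Adj p.1 p.2} := by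
    ext; simp [and_comm]
  rw [this, card_filter, sum_product]
  refine sum_congr rfl fun v _ => ?_
  rw [← card_filter, ← G.card_neighborFinset_eq_degree, G.neighborFinset_eq_filter]

lemma two_mul_edgesIn_add_cutEdges (A : Finset V) :
    2 * edgesIn G A + cutEdges G A = vol G A := by
  have hsplit := card_filter_add_card_filter_not (s := {p : V × V | G.Adj p.1 p.2 ∧ p.1 ∈ A})
    (fun p => p.2 ∈ A)
  simp only [filter_filter, and_assoc, card_adj_fst_mem] at hsplit
  rw [edgesIn, Nat.card_eq_fintype_card, Fintype.card_subtype, cutEdges, vol]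
  simp only [degR_eq_degree, mul_div_cancel₀ _ (two_ne_zero (α := ℝ))]
  exact_mod_cast hsplit

lemma sum_vol_parts (P : Finpartition (univ : Finset V)) :
    ∑ A ∈ P.parts, vol G A = 2 * edgeCount G := by
  calc ∑ A ∈ P.parts, vol G A = ∑ v ∈ P.parts.biUnion id, degR G v :=
        (sum_biUnion P.supIndep.pairwiseDisjoint).symm
    _ = ∑ v, G.degree v := by simp only [P.biUnion_parts, degR_eq_degree, Nat.cast_sum]
    _ = 2 * edgeCount G := by
        rw [G.sum_degrees_eq_twice_card_edges, edgeCount_eq_card_edgeFinset]; push_cast; rfl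

end Counting

section Modularity

variable {G : SimpleGraph V} [DecidableRel G.Adj] (P : Finpartition (univ : Finset V))

lemma sum_edgesIn_parts :
    ∑ A ∈ P.parts, edgesIn G A = edgeCount G - (∑ A ∈ P.parts, (cutEdges G A : ℝ)) / 2 := by
  have h := sum_congr rfl fun A (_ : A ∈ P.parts) => two_mul_edgesIn_add_cutEdges G A
  rw [sum_add_distrib, ← mul_sum, sum_vol_parts] at h
  linarith

lemma modularityOf_eq (he : edgeCount G ≠ 0) :
    modularityOf G P = 1 - (∑ A ∈ P.parts, (cutEdges G A : ℝ)) / (2 * edgeCount G)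
      - ∑ A ∈ P.parts, vol G A ^ 2 / (4 * edgeCount G ^ 2) := by
  rw [modularityOf, sum_sub_distrib, ← sum_div, sum_edgesIn_parts]
  unfold vol
  field_simp

lemma modularityOf_le_of_edgeCount_le_two_mul_vol (he : edgeCount G ≠ 0) {A : Finset V}
    (hA : A ∈ P.parts) (hvol : edgeCount G ≤ 2 * vol G A) : modularityOf G P ≤ 15 / 16 := by
  have hcut : 0 ≤ (∑ B ∈ P.parts, (cutEdges G B : ℝ)) / (2 * edgeCount G) :=
    div_nonneg (by positivity) (by linarith [edgeCount_nonneg G])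
  have hsingle : vol G A ^ 2 / (4 * edgeCount G ^ 2) ≤
      ∑ B ∈ P.parts, vol G B ^ 2 / (4 * edgeCount G ^ 2) :=
    single_le_sum (f := fun B => vol G B ^ 2 / (4 * edgeCount G ^ 2)) (fun _ _ => by positivity) hA
  have hquarter : 1 / 16 ≤ vol G A ^ 2 / (4 * edgeCount G ^ 2) := by
    rw [le_div_iff₀ (by positivity)]
    nlinarith [edgeCount_nonneg G]
  rw [modularityOf_eq P he]
  linarith

end Modularity

section Expansion

variable {G : SimpleGraph V} [DecidableRel G.Adj]

lemma edgeExpansion_mul_card_le_cutEdges {S : Finset V} (hS : S.Nonempty)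
    (hcard : (#S : ℝ) ≤ Fintype.card V / 2) : edgeExpansion G * #S ≤ cutEdges G S := by
  have hbdd : BddBelow {r : ℝ | ∃ S : Finset V, S.Nonempty ∧
      (#S : ℝ) ≤ Fintype.card V / 2 ∧ r = (cutEdges G S : ℝ) / #S} :=
    ⟨0, by rintro _ ⟨S, -, -, rfl⟩; positivity⟩
  exact (le_div_iff₀ (by exact_mod_cast hS.card_pos)).1 (csInf_le hbdd ⟨S, hS, hcard, rfl⟩)

lemma edgeExpansion_mul_card_le_sum_cutEdges (P : Finpartition (univ : Finset V))
    (hsmall : ∀ A ∈ P.parts, (#A : ℝ) ≤ Fintype.card V / 2) :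
    edgeExpansion G * Fintype.card V ≤ ∑ A ∈ P.parts, (cutEdges G A : ℝ) :=
  calc edgeExpansion G * Fintype.card V = ∑ A ∈ P.parts, edgeExpansion G * #A := by
        rw [← mul_sum, ← Nat.cast_sum, P.sum_card_parts, card_univ]
    _ ≤ ∑ A ∈ P.parts, (cutEdges G A : ℝ) := sum_le_sum fun A hA =>
        edgeExpansion_mul_card_le_cutEdges (P.nonempty_of_mem_parts hA) (hsmall A hA)

lemma modularityOf_le_one_sub_edgeExpansion (P : Finpartition (univ : Finset V))
    (he : edgeCount G ≠ 0) (hsmall : ∀ A ∈ P.parts, (#A : ℝ) ≤ Fintype.card V / 2) :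
    modularityOf G P ≤ 1 - edgeExpansion G * Fintype.card V / (2 * edgeCount G) := by
  have hcut := edgeExpansion_mul_card_le_sum_cutEdges (G := G) P hsmall
  have hvol : 0 ≤ ∑ A ∈ P.parts, vol G A ^ 2 / (4 * edgeCount G ^ 2) := by positivity
  rw [modularityOf_eq P he]
  have : edgeExpansion G * Fintype.card V / (2 * edgeCount G) ≤
      (∑ A ∈ P.parts, (cutEdges G A : ℝ)) / (2 * edgeCount G) :=
    div_le_div_of_nonneg_right hcut (by linarith [edgeCount_nonneg G])
  linarith

omit [DecidableEq V] in
lemma card_le_half_of_vol_lt {m n : ℕ} (hdeg : ∀ v, m ≤ G.degree v) {A : Finset V}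
    (hvol : vol G A < m * n / 2) : (#A : ℝ) ≤ n / 2 := by
  have hmin : #A • (m : ℝ) ≤ vol G A :=
    card_nsmul_le_sum A (degR G) m fun v _ => by rw [degR_eq_degree]; exact_mod_cast hdeg v
  rw [nsmul_eq_mul] at hmin
  nlinarith [(Nat.cast_nonneg m : (0 : ℝ) ≤ m)]

end Expansion

theorem statement13_general (G : SimpleGraph V) [DecidableRel G.Adj]
    (m n : ℕ) (hn : n = Fintype.card V)
    (hE : G.edgeFinset.card = m * n) (hdeg : ∀ v : V, m ≤ G.degree v) :
    modularity G ≤ max (15 / 16) (1 - edgeExpansion G / (2 * m)) := by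
  have he : edgeCount G = m * n := by rw [edgeCount_eq_card_edgeFinset, hE]; push_cast; rfl
  refine Real.sSup_le ?_ (le_max_of_le_left (by norm_num))
  rintro _ ⟨P, rfl⟩
  rcases eq_or_ne (edgeCount G) 0 with he0 | he0
  · -- without edges every quotient in `modularityOf` is a division by zero
    have hzero : modularityOf G P = 0 := by simp [modularityOf, he0]
    exact hzero ▸ le_max_of_le_left (by norm_num)
  by_cases hbig : ∃ A ∈ P.parts, edgeCount G ≤ 2 * vol G A
  · obtain ⟨A, hA, hvol⟩ := hbig
    exact le_max_of_le_left (modularityOf_le_of_edgeCount_le_two_mul_vol P he0 hA hvol)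
  push Not at hbig
  have hsmall : ∀ A ∈ P.parts, (#A : ℝ) ≤ Fintype.card V / 2 := fun A hA =>
    hn ▸ card_le_half_of_vol_lt hdeg (by linarith [hbig A hA])
  refine le_max_of_le_right ((modularityOf_le_one_sub_edgeExpansion P he0 hsmall).trans_eq ?_)
  have hm : (m : ℝ) ≠ 0 := by rintro h; simp [he, h] at he0
  have hn0 : (n : ℝ) ≠ 0 := by rintro h; simp [he, h] at he0
  rw [he, ← hn]
  field_simp

/-- if `G` is a graph on `n` vertices with exactly `m·n` edges (`m ≥ 1`)
in which every vertex has degree at least `m`, then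
`q*(G) ≤ max(15/16, 1 − ρ(G)/(2m))`. -/
theorem statement13 (G : SimpleGraph V) [DecidableRel G.Adj]
    (m n : ℕ) (hm : 1 ≤ m) (hn : n = Fintype.card V)
    (hE : G.edgeFinset.card = m * n) (hdeg : ∀ v : V, m ≤ G.degree v) :
    modularity G ≤ max (15 / 16) (1 - edgeExpansion G / (2 * m)) :=
  statement13_general G m n hn hE hdeg

end
end
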